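/- For smooth vector fields u, v, m on the flat n-torus (periodic boundary conditions), the L² pairing ⟨v, Γ_m u⟩ equals ⟨m, [v,u]⟩, where Γ_m u = ∇m·u + (∇u)ᵀ·m + m(∇·u) and [v,u] is the vector field commutator. Consequently Γ_m is skew-symmetric: ⟨v, Γ_m u⟩ + ⟨u, Γ_m v⟩ = 0. -/

import Mathlib

open Finset MeasureTheory

/-- Partial derivative ∂f/∂x_j of a scalar field on ℝⁿ. -/
noncomputable def pderiv' (n : ℕ) (f : (Fin n → ℝ) → ℝ) (x : Fin n → ℝ)
    (j : Fin n) : ℝ :=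
  fderiv ℝ f x (Pi.single j 1)

/-- The vector field commutator [v,u]_i = Σ_j (v_j ∂u_i/∂x_j − u_j ∂v_i/∂x_j). -/
noncomputable def vfComm (n : ℕ) (v u : (Fin n → ℝ) → (Fin n → ℝ)) :
    (Fin n → ℝ) → (Fin n → ℝ) :=
  fun x i => ∑ j : Fin n,
    (v x j * pderiv' n (fun y => u y i) x j - u x j * pderiv' n (fun y => v y i) x j)

/-- The operator Γ_m u = ∇m·u + (∇u)ᵀ·m + m (∇·u), componentwise. -/
noncomputable def GammaOp (n : ℕ) (m u : (Fin n → ℝ) → (Fin n → ℝ)) :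
    (Fin n → ℝ) → (Fin n → ℝ) :=
  fun x i =>
    (∑ j : Fin n, (u x j * pderiv' n (fun y => m y i) x j +
                   m x j * pderiv' n (fun y => u y j) x i)) +
    m x i * ∑ j : Fin n, pderiv' n (fun y => u y j) x j

/-- L² pairing of two vector fields over the fundamental domain [−1,1]ⁿ of the
    flat n-torus. -/
noncomputable def torusPair (n : ℕ) (a b : (Fin n → ℝ) → (Fin n → ℝ)) : ℝ :=
  ∫ x in (Set.univ.pi fun _ : Fin n => Set.Icc (-1 : ℝ) 1),
    ∑ i : Fin n, a x i * b x i

/-- A vector field on the flat n-torus: smooth and periodic with period 2 in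
    each coordinate direction. -/
def IsTorusVF (n : ℕ) (u : (Fin n → ℝ) → (Fin n → ℝ)) : Prop :=
  ContDiff ℝ (⊤ : ℕ∞) u ∧ ∀ (x : Fin n → ℝ) (i : Fin n), u (x + Pi.single i 2) = u x


section Helpers

lemma cont_pderiv' (n : ℕ) (f : (Fin n → ℝ) → ℝ) (hf : ContDiff ℝ (⊤ : ℕ∞) f) (j : Fin n) :
    Continuous fun x => pderiv' n f x j :=
  (hf.continuous_fderiv (by simp)).clm_apply continuous_const

lemma pderiv'_mul {n : ℕ} {f g : (Fin n → ℝ) → ℝ} {x : Fin n → ℝ}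
    (hf : DifferentiableAt ℝ f x) (hg : DifferentiableAt ℝ g x) (j : Fin n) :
    pderiv' n (fun y => f y * g y) x j = f x * pderiv' n g x j + g x * pderiv' n f x j := by
  unfold pderiv'
  rw [fderiv_fun_mul hf hg]
  simp [smul_eq_mul]

lemma pderiv'_sum {n : ℕ} {ι : Type*} {s : Finset ι} {A : ι → (Fin n → ℝ) → ℝ}
    {x : Fin n → ℝ} (h : ∀ i ∈ s, DifferentiableAt ℝ (A i) x) (j : Fin n) :
    pderiv' n (fun y => ∑ i ∈ s, A i y) x j = ∑ i ∈ s, pderiv' n (A i) x j := by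
  unfold pderiv'
  rw [fderiv_fun_sum h]
  simp

lemma insertNth_shift {k : ℕ} (i : Fin (k+1)) (x : Fin k → ℝ) :
    (Fin.insertNth i (-1 : ℝ) x : Fin (k+1) → ℝ) + Pi.single i 2
      = Fin.insertNth i (1 : ℝ) x := by
  funext j
  rcases eq_or_ne j i with rfl | h
  · simp only [Pi.add_apply, Fin.insertNth_apply_same, Pi.single_eq_same]; norm_num
  · rcases Fin.exists_succAbove_eq h with ⟨p, rfl⟩
    simp [Fin.insertNth_apply_succAbove, Pi.single_eq_of_ne (Fin.succAbove_ne i p)]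

lemma divZero (n : ℕ) (F : (Fin n → ℝ) → (Fin n → ℝ)) (hF : ContDiff ℝ (⊤ : ℕ∞) F)
    (hper : ∀ (x : Fin n → ℝ) (i : Fin n), F (x + Pi.single i 2) = F x) :
    ∫ x in (Set.univ.pi fun _ : Fin n => Set.Icc (-1:ℝ) 1),
      ∑ j : Fin n, pderiv' n (fun y => F y j) x j = 0 := by
  cases n with
  | zero => simp
  | succ k =>
    set a : Fin (k+1) → ℝ := fun _ => -1
    set b : Fin (k+1) → ℝ := fun _ => 1
    have hle : a ≤ b := fun _ => by norm_num [a, b]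
    have hdiff := hF.differentiable (by simp)
    have hcomp : ∀ (x : Fin (k+1) → ℝ) (i : Fin (k+1)),
        pderiv' (k+1) (fun y => F y i) x (i) = fderiv ℝ F x (Pi.single i 1) i := by
      intro x i
      have h := (hasFDerivAt_pi'.mp (hdiff x).hasFDerivAt) i
      rw [pderiv', h.fderiv]
      rfl
    have hbox : (Set.univ.pi fun _ : Fin (k+1) => Set.Icc (-1:ℝ) 1) = Set.Icc a b := by
      rw [← Set.pi_univ_Icc]
    have hcont : Continuous fun x => ∑ i : Fin (k+1), fderiv ℝ F x (Pi.single i 1) i := by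
      refine continuous_finset_sum _ fun i _ => ?_
      exact (continuous_apply i).comp ((hF.continuous_fderiv (by simp)).clm_apply continuous_const)
    have key := integral_divergence_of_hasFDerivAt_off_countable (a := a) (b := b) hle
      F (fun x => fderiv ℝ F x) ∅ Set.countable_empty
      (hF.continuous.continuousOn)
      (fun x _ => (hdiff x).hasFDerivAt)
      (hcont.continuousOn.integrableOn_compact isCompact_Icc)
    rw [hbox]
    calc (∫ x in Set.Icc a b, ∑ j : Fin (k+1), pderiv' (k+1) (fun y => F y j) x j)
        = ∫ x in Set.Icc a b, ∑ i : Fin (k+1), fderiv ℝ F x (Pi.single i 1) i := by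
          refine setIntegral_congr_fun measurableSet_Icc fun x _ => ?_
          exact Finset.sum_congr rfl fun i _ => hcomp x i
      _ = 0 := by
          rw [key]
          refine Finset.sum_eq_zero fun i _ => ?_
          have : ∀ x : Fin k → ℝ, F (Fin.insertNth i (b i) x) = F (Fin.insertNth i (a i) x) := by
            intro x
            have h2 := hper (Fin.insertNth i (-1 : ℝ) x) i
            rw [insertNth_shift] at h2
            exact h2
          simp only [this, sub_self]

lemma alg (n : ℕ) (V M U : Fin n → ℝ) (A B C : Fin n → Fin n → ℝ) :
    ∑ i, V i * ((∑ j, (U j * A i j + M j * B j i)) + M i * ∑ j, B j j)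
      - ∑ i, M i * ∑ j, (V j * B i j - U j * C i j)
    = ∑ j, (U j * (∑ i, (V i * A i j + M i * C i j)) + (∑ i, V i * M i) * B j j) := by
  have h24 : (∑ i, ∑ j, V i * (M j * B j i)) = ∑ i, ∑ j, M i * (V j * B i j) := by
    rw [Finset.sum_comm]
    exact Finset.sum_congr rfl fun i _ => Finset.sum_congr rfl fun j _ => by ring
  simp only [Finset.mul_sum, Finset.sum_mul, Finset.sum_add_distrib, Finset.sum_sub_distrib,
    mul_add, mul_sub]
  rw [Finset.sum_comm (f := fun j i => U j * (V i * A i j)),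
      Finset.sum_comm (f := fun j i => U j * (M i * C i j)),
      Finset.sum_comm (f := fun j i => V i * M i * B j j)]
  rw [h24]
  have e1 : (∑ i : Fin n, ∑ j : Fin n, V i * (U j * A i j))
      = ∑ i : Fin n, ∑ j : Fin n, U j * (V i * A i j) :=
    Finset.sum_congr rfl fun i _ => Finset.sum_congr rfl fun j _ => by ring
  have e2 : (∑ i : Fin n, ∑ j : Fin n, M i * (U j * C i j))
      = ∑ i : Fin n, ∑ j : Fin n, U j * (M i * C i j) :=
    Finset.sum_congr rfl fun i _ => Finset.sum_congr rfl fun j _ => by ring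
  have e3 : (∑ i : Fin n, ∑ j : Fin n, V i * (M i * B j j))
      = ∑ i : Fin n, ∑ j : Fin n, V i * M i * B j j :=
    Finset.sum_congr rfl fun i _ => Finset.sum_congr rfl fun j _ => by ring
  rw [e1, e2, e3]
  ring

lemma pointwise_div (n : ℕ) (m u v : (Fin n → ℝ) → (Fin n → ℝ))
    (hm : ContDiff ℝ (⊤ : ℕ∞) m) (hu : ContDiff ℝ (⊤ : ℕ∞) u) (hv : ContDiff ℝ (⊤ : ℕ∞) v) (x : Fin n → ℝ) :
    (∑ i, v x i * GammaOp n m u x i) - (∑ i, m x i * vfComm n v u x i)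
      = ∑ j, pderiv' n (fun y => u y j * ∑ i, v y i * m y i) x j := by
  have hmc : ∀ i, Differentiable ℝ fun y => m y i :=
    fun i => (contDiff_pi.1 hm i).differentiable (by simp)
  have huc : ∀ i, Differentiable ℝ fun y => u y i :=
    fun i => (contDiff_pi.1 hu i).differentiable (by simp)
  have hvc : ∀ i, Differentiable ℝ fun y => v y i :=
    fun i => (contDiff_pi.1 hv i).differentiable (by simp)
  have hterm : ∀ i : Fin n, DifferentiableAt ℝ (fun y => v y i * m y i) x :=
    fun i => ((hvc i) x).mul ((hmc i) x)
  have hS : DifferentiableAt ℝ (fun y => ∑ i, v y i * m y i) x := by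
    exact DifferentiableAt.fun_sum fun i _ => hterm i
  have hR : ∀ j : Fin n, pderiv' n (fun y => u y j * ∑ i, v y i * m y i) x j
      = u x j * (∑ i, (v x i * pderiv' n (fun y => m y i) x j
            + m x i * pderiv' n (fun y => v y i) x j))
        + (∑ i, v x i * m x i) * pderiv' n (fun y => u y j) x j := by
    intro j
    have hSd : pderiv' n (fun y => ∑ i, v y i * m y i) x j
        = ∑ i, (v x i * pderiv' n (fun y => m y i) x j
            + m x i * pderiv' n (fun y => v y i) x j) := by
      rw [pderiv'_sum (fun i _ => hterm i) j]
      exact Finset.sum_congr rfl fun i _ => by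
        rw [pderiv'_mul ((hvc i) x) ((hmc i) x) j]
    rw [pderiv'_mul ((huc j) x) hS j, hSd]
  calc (∑ i, v x i * GammaOp n m u x i) - (∑ i, m x i * vfComm n v u x i)
      = ∑ j, (u x j * (∑ i, (v x i * pderiv' n (fun y => m y i) x j
            + m x i * pderiv' n (fun y => v y i) x j))
          + (∑ i, v x i * m x i) * pderiv' n (fun y => u y j) x j) := by
        exact alg n (fun i => v x i) (fun i => m x i) (fun i => u x i)
          (fun i j => pderiv' n (fun y => m y i) x j)
          (fun i j => pderiv' n (fun y => u y i) x j)
          (fun i j => pderiv' n (fun y => v y i) x j)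
    _ = ∑ j, pderiv' n (fun y => u y j * ∑ i, v y i * m y i) x j :=
        Finset.sum_congr rfl fun j _ => (hR j).symm

lemma pairing_eq (n : ℕ) (m u v : (Fin n → ℝ) → (Fin n → ℝ))
    (hm : IsTorusVF n m) (hu : IsTorusVF n u) (hv : IsTorusVF n v) :
    torusPair n v (GammaOp n m u) = torusPair n m (vfComm n v u) := by
  obtain ⟨hm1, hm2⟩ := hm
  obtain ⟨hu1, hu2⟩ := hu
  obtain ⟨hv1, hv2⟩ := hv
  set Box := (Set.univ.pi fun _ : Fin n => Set.Icc (-1:ℝ) 1) with hBox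
  have hBoxC : IsCompact Box := isCompact_univ_pi fun _ => isCompact_Icc
  have cmi : ∀ i : Fin n, Continuous fun x => m x i :=
    fun i => (continuous_apply i).comp hm1.continuous
  have cui : ∀ i : Fin n, Continuous fun x => u x i :=
    fun i => (continuous_apply i).comp hu1.continuous
  have cvi : ∀ i : Fin n, Continuous fun x => v x i :=
    fun i => (continuous_apply i).comp hv1.continuous
  have cG : Continuous fun x => ∑ i, v x i * GammaOp n m u x i := by
    refine continuous_finset_sum _ fun i _ => (cvi i).mul ?_
    unfold GammaOp
    refine Continuous.add (continuous_finset_sum _ fun j _ => ?_) ((cmi i).mul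
      (continuous_finset_sum _ fun j _ => cont_pderiv' n _ (contDiff_pi.1 hu1 j) j))
    exact ((cui j).mul (cont_pderiv' n _ (contDiff_pi.1 hm1 i) j)).add
      ((cmi j).mul (cont_pderiv' n _ (contDiff_pi.1 hu1 j) i))
  have cC : Continuous fun x => ∑ i, m x i * vfComm n v u x i := by
    refine continuous_finset_sum _ fun i _ => (cmi i).mul ?_
    unfold vfComm
    refine continuous_finset_sum _ fun j _ => Continuous.sub ?_ ?_
    · exact (cvi j).mul (cont_pderiv' n _ (contDiff_pi.1 hu1 i) j)
    · exact (cui j).mul (cont_pderiv' n _ (contDiff_pi.1 hv1 i) j)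
  have int1 : IntegrableOn (fun x => ∑ i, v x i * GammaOp n m u x i) Box :=
    cG.continuousOn.integrableOn_compact hBoxC
  have int2 : IntegrableOn (fun x => ∑ i, m x i * vfComm n v u x i) Box :=
    cC.continuousOn.integrableOn_compact hBoxC
  have hFsmooth : ContDiff ℝ (⊤ : ℕ∞) (fun x => fun j : Fin n => u x j * ∑ i, v x i * m x i) := by
    refine contDiff_pi.2 fun j => (contDiff_pi.1 hu1 j).mul ?_
    exact ContDiff.sum fun i _ => (contDiff_pi.1 hv1 i).mul (contDiff_pi.1 hm1 i)
  have hFper : ∀ (x : Fin n → ℝ) (i : Fin n),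
      (fun x => fun j : Fin n => u x j * ∑ i, v x i * m x i) (x + Pi.single i 2)
        = (fun x => fun j : Fin n => u x j * ∑ i, v x i * m x i) x := by
    intro x i
    funext j
    simp only [hu2, hv2, hm2]
  have h0 := divZero n (fun x => fun j : Fin n => u x j * ∑ i, v x i * m x i) hFsmooth hFper
  have hsub : torusPair n v (GammaOp n m u) - torusPair n m (vfComm n v u)
      = ∫ x in Box, ((∑ i, v x i * GammaOp n m u x i) - ∑ i, m x i * vfComm n v u x i) :=
    (integral_sub int1 int2).symm
  have hptw : (fun x => (∑ i, v x i * GammaOp n m u x i) - ∑ i, m x i * vfComm n v u x i)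
      = fun x => ∑ j, pderiv' n (fun y => u y j * ∑ i, v y i * m y i) x j :=
    funext fun x => pointwise_div n m u v hm1 hu1 hv1 x
  have h0' : ∫ x in Box, ∑ j, pderiv' n (fun y => u y j * ∑ i, v y i * m y i) x j = 0 := h0
  rw [hptw, h0'] at hsub
  exact sub_eq_zero.mp hsub

/-- ⟨v, Γ_m u⟩ = ⟨m, [v,u]⟩, and consequently Γ_m is
    skew-symmetric: ⟨v, Γ_m u⟩ + ⟨u, Γ_m v⟩ = 0. -/
theorem GammaOp_pairing_and_skew (n : ℕ) (m u v : (Fin n → ℝ) → (Fin n → ℝ))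
    (hm : IsTorusVF n m) (hu : IsTorusVF n u) (hv : IsTorusVF n v) :
    torusPair n v (GammaOp n m u) = torusPair n m (vfComm n v u) ∧
    torusPair n v (GammaOp n m u) + torusPair n u (GammaOp n m v) = 0 := by
  have p1 := pairing_eq n m u v hm hu hv
  have p2 := pairing_eq n m v u hm hv hu
  have anti : torusPair n m (vfComm n u v) = - torusPair n m (vfComm n v u) := by
    unfold torusPair
    rw [← integral_neg]
    refine setIntegral_congr_fun (MeasurableSet.univ_pi fun _ => measurableSet_Icc)
      fun x _ => ?_
    rw [← Finset.sum_neg_distrib]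
    refine Finset.sum_congr rfl fun i _ => ?_
    unfold vfComm
    rw [← mul_neg, ← Finset.sum_neg_distrib]
    congr 1
    exact Finset.sum_congr rfl fun j _ => by ring
  exact ⟨p1, by rw [p1, p2, anti]; ring⟩
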